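/- arXiv:1807.06007 — 3 statements merged into one kernel-verified Lean document; each statement's English description precedes it below -/
import Mathlib

section
/- For every Lebesgue eigenbasis (ψ_i, λ_i) for (μ, f, n), the Lebesgue quadrature reproduces the integral of f exactly: ∫ f dμ = Σ_{i=0}^{n−1} λ_i w^[i], where w^[i] = (∫ ψ_i dμ)². -/
open MeasureTheory Polynomial

/-- A Lebesgue eigenbasis for `(μ, f, n)`: real polynomials `ψ i` of degree `≤ n-1`
and reals `lam i` with `∫ ψ i ψ j dμ = δ_{ij}` and `∫ ψ i ψ j f dμ = lam i δ_{ij}`. -/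
def LebesgueEigenbasis (μ : Measure ℝ) (f : ℝ → ℝ) (n : ℕ)
    (ψ : Fin n → Polynomial ℝ) (lam : Fin n → ℝ) : Prop :=
  (∀ i, (ψ i).natDegree ≤ n - 1) ∧
  (∀ i j, (∫ x, (ψ i).eval x * (ψ j).eval x ∂μ) = if i = j then 1 else 0) ∧
  (∀ i j, (∫ x, (ψ i).eval x * (ψ j).eval x * f x ∂μ) = if i = j then lam i else 0)

/-! Orthonormal polynomials are linearly independent, so the `n` polynomials `ψ i` of degree
`< n` span all polynomials of degree `< n`, and `1 = ∑ i, c i * ψ i` for some `c`. Integrating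
`g = 1 * g` then gives `∫ g = ∑ i, c i * ∫ ψ i * g`: for `g = ψ j` this says `c j = ∫ ψ j`, for
`g = ψ j * f` it says `∫ ψ j * f = c j * lam j`, and for `g = f` it is the quadrature formula. -/

section
open Finset

variable {α ι : Type*} [MeasurableSpace α] {μ : Measure α}

theorem integral_sum_mul_eq_sum_mul_integral (s : Finset ι) (c : ι → ℝ) {ψ : ι → α → ℝ}
    {g : α → ℝ} (hg : ∀ i ∈ s, Integrable (fun x => ψ i x * g x) μ) :
    ∫ x, (∑ i ∈ s, c i * ψ i x) * g x ∂μ = ∑ i ∈ s, c i * ∫ x, ψ i x * g x ∂μ := by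
  simp_rw [sum_mul, mul_assoc]
  rw [integral_finsetSum s fun i hi => (hg i hi).const_mul (c i)]
  simp_rw [integral_const_mul]

theorem integral_eq_sum_mul_integral_of_sum_eq_one [Fintype ι] {c : ι → ℝ} {ψ : ι → α → ℝ}
    (hc : ∀ x, ∑ i, c i * ψ i x = 1) {g : α → ℝ}
    (hg : ∀ i, Integrable (fun x => ψ i x * g x) μ) :
    ∫ x, g x ∂μ = ∑ i, c i * ∫ x, ψ i x * g x ∂μ := by
  simpa [hc] using integral_sum_mul_eq_sum_mul_integral univ c fun i _ => hg i

end

namespace Polynomial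

theorem mem_span_of_linearIndependent_of_mem_degreeLT {K ι : Type*} [Field K]
    [Fintype ι] {n : ℕ} {ψ : ι → K[X]} (hψ : ∀ i, ψ i ∈ degreeLT K n)
    (hli : LinearIndependent K ψ) (hcard : Fintype.card ι = n) {p : K[X]}
    (hp : p ∈ degreeLT K n) : p ∈ Submodule.span K (Set.range ψ) := by
  have : FiniteDimensional K (degreeLT K n) := (degreeLTEquiv K n).symm.finiteDimensional
  have hspan : Submodule.span K (Set.range ψ) = degreeLT K n :=
    Submodule.eq_of_le_of_finrank_eq (Submodule.span_le.mpr (Set.range_subset_iff.mpr hψ))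
      (by rw [finrank_span_eq_card hli, hcard, (degreeLTEquiv K n).finrank_eq,
        Module.finrank_fin_fun])
  exact hspan ▸ hp

variable {μ : Measure ℝ}

theorem integrable_eval_mul_of_natDegree_le {g : ℝ → ℝ} {p : ℝ[X]} {N : ℕ}
    (hp : p.natDegree ≤ N) (hg : ∀ m ≤ N, Integrable (fun x => g x * x ^ m) μ) :
    Integrable (fun x => p.eval x * g x) μ := by
  simp_rw [eval_eq_sum_range, Finset.sum_mul, mul_assoc, mul_comm (_ ^ _) (g _)]
  exact integrable_finsetSum _ fun m hm =>
    (hg m ((Nat.lt_succ_iff.mp (Finset.mem_range.mp hm)).trans hp)).const_mul _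

theorem integrable_eval_of_integrable_abs_pow
    (hmom : ∀ k : ℕ, Integrable (fun x => |x| ^ k) μ) (p : ℝ[X]) :
    Integrable (fun x => p.eval x) μ := by
  have hpow (k : ℕ) : Integrable (fun x : ℝ => x ^ k) μ :=
    (integrable_norm_iff (measurable_id.pow_const k).aestronglyMeasurable).mp
      (by simpa [Real.norm_eq_abs, abs_pow] using hmom k)
  simpa using integrable_eval_mul_of_natDegree_le (g := fun _ => 1) le_rfl fun m _ => by
    simpa using hpow m

theorem linearIndependent_of_integral_eval_mul_eval {ι : Type*} [Fintype ι] [DecidableEq ι]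
    {ψ : ι → ℝ[X]} (hint : ∀ i j, Integrable (fun x => (ψ i).eval x * (ψ j).eval x) μ)
    (horth : ∀ i j, ∫ x, (ψ i).eval x * (ψ j).eval x ∂μ = if i = j then 1 else 0) :
    LinearIndependent ℝ ψ := by
  refine Fintype.linearIndependent_iff.mpr fun a ha j => ?_
  have hzero (x : ℝ) : ∑ i, a i * (ψ i).eval x = 0 := by
    simpa [eval_finsetSum] using congrArg (eval x) ha
  calc a j = ∑ i, a i * ∫ x, (ψ i).eval x * (ψ j).eval x ∂μ := by simp [horth]
    _ = ∫ x, (∑ i, a i * (ψ i).eval x) * (ψ j).eval x ∂μ :=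
      (integral_sum_mul_eq_sum_mul_integral _ a fun i _ => hint i j).symm
    _ = 0 := by simp [hzero]

theorem exists_sum_mul_eval_eq_one {n : ℕ} (hn : 1 ≤ n) {ψ : Fin n → ℝ[X]}
    (hdeg : ∀ i, (ψ i).natDegree < n)
    (hint : ∀ i j, Integrable (fun x => (ψ i).eval x * (ψ j).eval x) μ)
    (horth : ∀ i j, ∫ x, (ψ i).eval x * (ψ j).eval x ∂μ = if i = j then 1 else 0) :
    ∃ c : Fin n → ℝ, ∀ x, ∑ i, c i * (ψ i).eval x = 1 := by
  have hψ (i : Fin n) : ψ i ∈ degreeLT ℝ n :=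
    mem_degreeLT.mpr <| degree_le_natDegree.trans_lt <| by exact_mod_cast hdeg i
  have hone : (1 : ℝ[X]) ∈ degreeLT ℝ n :=
    mem_degreeLT.mpr <| by rw [degree_one]; exact_mod_cast hn
  obtain ⟨c, hc⟩ := (Submodule.mem_span_range_iff_exists_fun ℝ).mp <|
    mem_span_of_linearIndependent_of_mem_degreeLT hψ
      (linearIndependent_of_integral_eval_mul_eval hint horth) (Fintype.card_fin n) hone
  exact ⟨c, fun x => by simpa [eval_finsetSum] using congrArg (eval x) hc⟩

end Polynomial

theorem lebesgue_quadrature_exact_for_f_general (n : ℕ) (hn : 1 ≤ n) (μ : Measure ℝ)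
    (hmom : ∀ k : ℕ, Integrable (fun x => |x| ^ k) μ)
    (f : ℝ → ℝ)
    (hfint : ∀ m ≤ 2 * n - 2, Integrable (fun x => f x * x ^ m) μ)
    (ψ : Fin n → Polynomial ℝ) (lam : Fin n → ℝ)
    (heb : LebesgueEigenbasis μ f n ψ lam) :
    (∫ x, f x ∂μ) = ∑ i, lam i * (∫ x, (ψ i).eval x ∂μ) ^ 2 := by
  obtain ⟨hdeg, horth, heig⟩ := heb
  have hψψ (i j : Fin n) : Integrable (fun x => (ψ i).eval x * (ψ j).eval x) μ := by
    simpa using integrable_eval_of_integrable_abs_pow hmom (ψ i * ψ j)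
  have hψf (i : Fin n) : Integrable (fun x => (ψ i).eval x * f x) μ :=
    integrable_eval_mul_of_natDegree_le (by have := hdeg i; omega) hfint
  have hψψf (i j : Fin n) : Integrable (fun x => (ψ i).eval x * ((ψ j).eval x * f x)) μ := by
    have hdeg_mul : (ψ i * ψ j).natDegree ≤ 2 * n - 2 :=
      natDegree_mul_le.trans (by have := hdeg i; have := hdeg j; omega)
    simpa [mul_assoc] using integrable_eval_mul_of_natDegree_le hdeg_mul hfint
  obtain ⟨c, hc⟩ := exists_sum_mul_eval_eq_one hn (fun i => by have := hdeg i; omega) hψψ horth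
  have hweight (j : Fin n) : ∫ x, (ψ j).eval x ∂μ = c j := by
    simpa [horth] using integral_eq_sum_mul_integral_of_sum_eq_one hc fun i => hψψ i j
  have hmoment (j : Fin n) : ∫ x, (ψ j).eval x * f x ∂μ = c j * lam j := by
    simpa [← mul_assoc, heig, eq_comm] using
      integral_eq_sum_mul_integral_of_sum_eq_one hc fun i => hψψf i j
  calc ∫ x, f x ∂μ = ∑ j, c j * ∫ x, (ψ j).eval x * f x ∂μ :=
        integral_eq_sum_mul_integral_of_sum_eq_one hc hψf
    _ = ∑ j, lam j * (∫ x, (ψ j).eval x ∂μ) ^ 2 := by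
        simp only [hmoment, hweight]; exact Finset.sum_congr rfl fun j _ => by ring

/-- the Lebesgue quadrature reproduces `∫ f dμ` exactly. -/
theorem lebesgue_quadrature_exact_for_f (n : ℕ) (hn : 1 ≤ n) (μ : Measure ℝ)
    (hmom : ∀ k : ℕ, Integrable (fun x => |x| ^ k) μ)
    (hgram : (Matrix.of fun j k : Fin n => ∫ x, x ^ ((j : ℕ) + (k : ℕ)) ∂μ).PosDef)
    (f : ℝ → ℝ) (hf : Measurable f)
    (hfint : ∀ m ≤ 2 * n - 2, Integrable (fun x => f x * x ^ m) μ)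
    (ψ : Fin n → Polynomial ℝ) (lam : Fin n → ℝ)
    (heb : LebesgueEigenbasis μ f n ψ lam) :
    (∫ x, f x ∂μ) = ∑ i, lam i * (∫ x, (ψ i).eval x ∂μ) ^ 2 :=
  lebesgue_quadrature_exact_for_f_general n hn μ hmom f hfint ψ lam heb
end

section
/- Let (ψ_i, λ_i) be a Lebesgue eigenbasis for (μ, f, n) with f(x) = x, and suppose also that the polynomials 1, x, …, x^n are linearly independent in L²(μ). Then the λ_i are pairwise distinct and are exactly the n roots of the monic degree-n polynomial π_n that is orthogonal in L²(μ) to every polynomial of degree ≤ n−1, and for each i the polynomial (x − λ_i) ψ_i(x) is a nonzero scalar multiple of π_n(x). -/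
/-!
Write `⟨p, q⟩ = ∫ p q dμ` and `Pₙ` for the polynomials of degree `< n`, on which `⟨·,·⟩` is
positive definite. The orthonormal family `ψ` spans `Pₙ`, and the eigen-relations say exactly that
`φᵢ = (X - λᵢ) ψᵢ` is orthogonal to every `ψⱼ`, hence to `Pₙ`. A nonzero polynomial of degree
`≤ n` orthogonal to `Pₙ` has degree exactly `n` and is determined by its leading coefficient, so
every `φᵢ` is a nonzero multiple of one monic `π`. Thus each `λᵢ` is a root of `π`; if `λᵢ = λⱼ`,
cancelling `X - λᵢ` makes `ψᵢ` and `ψⱼ` proportional, which orthonormality forbids. So `π` has the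
`n` distinct roots `λᵢ` and no others.
-/

open MeasureTheory Polynomial

open LinearMap (BilinForm)

namespace Polynomial

theorem mem_degreeLT_of_natDegree_le_pred {R : Type*} [Semiring R] {n : ℕ} (hn : 0 < n)
    {q : R[X]} (hq : q.natDegree ≤ n - 1) : q ∈ degreeLT R n :=
  mem_degreeLT.2 <| degree_le_natDegree.trans_lt <| by exact_mod_cast (by omega : q.natDegree < n)

theorem eval_eq_zero_iff_exists_eq {R : Type*} [CommRing R] [IsDomain R] {ι : Type*}
    [Fintype ι] {p : R[X]} (hp : p ≠ 0) (hdeg : p.natDegree ≤ Fintype.card ι) {r : ι → R}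
    (hr : Function.Injective r) (hroot : ∀ i, p.eval (r i) = 0) (x : R) :
    p.eval x = 0 ↔ ∃ i, r i = x := by
  classical
  refine ⟨fun hx => ?_, fun ⟨i, hi⟩ => hi ▸ hroot i⟩
  by_contra! hne
  have hsub : (insert x (Finset.univ.image r)).val ⊆ p.roots := fun y hy => by
    rw [mem_roots hp]
    simp only [Finset.mem_val, Finset.mem_insert, Finset.mem_image, Finset.mem_univ,
      true_and] at hy
    obtain rfl | ⟨i, rfl⟩ := hy
    exacts [hx, hroot i]
  have := card_le_degree_of_subset_roots hsub
  rw [Finset.card_insert_of_notMem (by simpa using hne), Finset.card_image_of_injective _ hr,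
    Finset.card_univ] at this
  omega

variable {K : Type*} [Field K]

theorem span_range_eq_degreeLT {ι : Type*} [Fintype ι] {ψ : ι → K[X]}
    (hψ : LinearIndependent K ψ) (hmem : ∀ i, ψ i ∈ degreeLT K (Fintype.card ι)) :
    Submodule.span K (Set.range ψ) = degreeLT K (Fintype.card ι) :=
  have := (degreeLTEquiv K (Fintype.card ι)).symm.finiteDimensional
  Submodule.eq_of_le_of_finrank_eq (Submodule.span_le.2 (Set.range_subset_iff.2 hmem)) <| by
    rw [finrank_span_eq_card hψ, (degreeLTEquiv K _).finrank_eq, Module.finrank_fin_fun]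


section Orthogonal

variable {B : BilinForm K K[X]} {n : ℕ}

theorem natDegree_eq_of_mem_orthogonal_degreeLT (hB : ∀ p ∈ degreeLT K n, B p p = 0 → p = 0)
    {p : K[X]} (hp : p ∈ B.orthogonal (degreeLT K n)) (hp0 : p ≠ 0) (hpn : p.natDegree ≤ n) :
    p.natDegree = n := by
  refine hpn.antisymm (not_lt.1 fun hlt => hp0 ?_)
  have hpLT : p ∈ degreeLT K n := mem_degreeLT.2 ((natDegree_lt_iff_degree_lt hp0).1 hlt)
  exact hB p hpLT (hp p hpLT)

theorem exists_monic_mem_orthogonal_degreeLT (hB : ∀ p ∈ degreeLT K n, B p p = 0 → p = 0)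
    {p : K[X]} (hp : p ∈ B.orthogonal (degreeLT K n)) (hp0 : p ≠ 0) (hpn : p.natDegree ≤ n) :
    ∃ π : K[X], π.Monic ∧ π.natDegree = n ∧ π ∈ B.orthogonal (degreeLT K n) := by
  have hc : p.leadingCoeff⁻¹ ≠ 0 := inv_ne_zero (leadingCoeff_ne_zero.2 hp0)
  refine ⟨C p.leadingCoeff⁻¹ * p, monic_C_mul_of_mul_leadingCoeff_eq_one ?_, ?_, ?_⟩
  · exact inv_mul_cancel₀ (leadingCoeff_ne_zero.2 hp0)
  · rw [natDegree_C_mul hc, natDegree_eq_of_mem_orthogonal_degreeLT hB hp hp0 hpn]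
  · rw [← smul_eq_C_mul]
    exact Submodule.smul_mem _ _ hp

theorem eq_C_coeff_mul_of_mem_orthogonal_degreeLT
    (hB : ∀ p ∈ degreeLT K n, B p p = 0 → p = 0) {π q : K[X]} (hπ : π.Monic)
    (hπn : π.natDegree = n) (hπo : π ∈ B.orthogonal (degreeLT K n))
    (hq : q ∈ B.orthogonal (degreeLT K n)) (hqn : q.natDegree ≤ n) :
    q = C (q.coeff n) * π := by
  set r := q - C (q.coeff n) * π
  have hro : r ∈ B.orthogonal (degreeLT K n) :=
    sub_mem hq (by rw [← smul_eq_C_mul]; exact Submodule.smul_mem _ _ hπo)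
  have hrLT : r ∈ degreeLT K n := mem_degreeLT.2 <| (degree_lt_iff_coeff_zero _ _).2 fun m hm => by
    obtain rfl | hm := hm.eq_or_lt
    · simp [r, ← hπn, hπ.coeff_natDegree]
    · simp [r, coeff_eq_zero_of_natDegree_lt (hqn.trans_lt hm),
        coeff_eq_zero_of_natDegree_lt (hπn ▸ hm)]
  exact sub_eq_zero.1 (hB r hrLT (hro r hrLT))

end Orthogonal

section Eigenbasis

variable {B : BilinForm K K[X]} {n : ℕ} {ψ : Fin n → K[X]} {lam : Fin n → K}

theorem X_sub_C_mul_mem_orthogonal_degreeLT (hψ : ∀ i, ψ i ∈ degreeLT K n)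
    (horth : ∀ i j, B (ψ i) (ψ j) = if i = j then 1 else 0)
    (heig : ∀ i j, B (ψ i) (X * ψ j) = if i = j then lam i else 0) (i : Fin n) :
    (X - C (lam i)) * ψ i ∈ B.orthogonal (degreeLT K n) := by
  have hli : LinearIndependent K ψ :=
    LinearMap.linearIndependent_of_isOrthoᵢ (B := B)
      (fun j k hjk => (horth j k).trans (if_neg hjk)) fun j => by simp [horth]
  have hspan := span_range_eq_degreeLT hli (by simpa using hψ)
  rw [Fintype.card_fin] at hspan
  suffices degreeLT K n ≤ LinearMap.ker (B.flip ((X - C (lam i)) * ψ i)) from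
    fun q hq => this hq
  rw [← hspan, Submodule.span_le, Set.range_subset_iff]
  intro j
  change B (ψ j) ((X - C (lam i)) * ψ i) = 0
  rw [sub_mul, ← smul_eq_C_mul, map_sub, map_smul, horth, heig, smul_eq_mul]
  split_ifs with hji <;> simp [hji]

theorem injective_and_exists_monic_orthogonal_of_eigenbasis (hn : 0 < n)
    (hB : ∀ p ∈ degreeLT K n, B p p = 0 → p = 0) (hψ : ∀ i, ψ i ∈ degreeLT K n)
    (horth : ∀ i j, B (ψ i) (ψ j) = if i = j then 1 else 0)
    (heig : ∀ i j, B (ψ i) (X * ψ j) = if i = j then lam i else 0) :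
    Function.Injective lam ∧ ∃ π : K[X], π.Monic ∧ π.natDegree = n ∧
      π ∈ B.orthogonal (degreeLT K n) ∧ (∀ x, π.eval x = 0 ↔ ∃ i, lam i = x) ∧
      ∀ i, ∃ c : K, c ≠ 0 ∧ (X - C (lam i)) * ψ i = C c * π := by
  set φ : Fin n → K[X] := fun i => (X - C (lam i)) * ψ i
  have hψ0 : ∀ i, ψ i ≠ 0 := fun i h => by simpa [h] using horth i i
  have hφ0 : ∀ i, φ i ≠ 0 := fun i => mul_ne_zero (X_sub_C_ne_zero _) (hψ0 i)
  have hφo : ∀ i, φ i ∈ B.orthogonal (degreeLT K n) :=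
    X_sub_C_mul_mem_orthogonal_degreeLT hψ horth heig
  have hφn : ∀ i, (φ i).natDegree ≤ n := fun i => by
    have := natDegree_lt_iff_degree_lt (hψ0 i) |>.2 (mem_degreeLT.1 (hψ i))
    exact (natDegree_mul_le).trans (by rw [natDegree_X_sub_C]; omega)
  obtain ⟨π, hπ, hπn, hπo⟩ :=
    exists_monic_mem_orthogonal_degreeLT hB (hφo ⟨0, hn⟩) (hφ0 _) (hφn _)
  have hmul : ∀ i, ∃ c : K, c ≠ 0 ∧ φ i = C c * π := fun i => by
    refine ⟨_, ?_, eq_C_coeff_mul_of_mem_orthogonal_degreeLT hB hπ hπn hπo (hφo i) (hφn i)⟩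
    rw [← natDegree_eq_of_mem_orthogonal_degreeLT hB (hφo i) (hφ0 i) (hφn i)]
    exact leadingCoeff_ne_zero.2 (hφ0 i)
  choose c hc hφπ using hmul
  have hroot : ∀ i, π.eval (lam i) = 0 := fun i => by
    simpa [φ, hc i] using congrArg (eval (lam i)) (hφπ i)
  have hinj : Function.Injective lam := by
    intro i j hij
    by_contra hne
    have hφj : (X - C (lam i)) * ψ j = C (c j) * π := hij ▸ hφπ j
    have hprop : C (c j) * ψ i = C (c i) * ψ j := mul_left_cancel₀ (X_sub_C_ne_zero (lam i)) <| by
      linear_combination C (c j) * hφπ i - C (c i) * hφj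
    have := congrArg (B (ψ i)) hprop
    simp only [← smul_eq_C_mul, map_smul, horth, if_neg hne, smul_eq_mul] at this
    exact hc j (by simpa using this)
  exact ⟨hinj, π, hπ, hπn, hπo, eval_eq_zero_iff_exists_eq hπ.ne_zero (by simp [hπn]) hinj hroot,
    fun i => ⟨c i, hc i, hφπ i⟩⟩

end Eigenbasis

end Polynomial

section MomentForm

open Matrix

variable {μ : Measure ℝ}

theorem Polynomial.integrable_eval (hμ : ∀ k : ℕ, Integrable (fun x : ℝ => x ^ k) μ)
    (p : ℝ[X]) : Integrable (fun x => p.eval x) μ := by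
  simp_rw [eval_eq_sum_range]
  exact integrable_finsetSum _ fun k _ => (hμ k).const_mul _

theorem Polynomial.integrable_eval_mul_eval (hμ : ∀ k : ℕ, Integrable (fun x : ℝ => x ^ k) μ)
    (p q : ℝ[X]) : Integrable (fun x => p.eval x * q.eval x) μ := by
  simpa using integrable_eval hμ (p * q)

noncomputable def momentForm (μ : Measure ℝ) (hμ : ∀ k : ℕ, Integrable (fun x : ℝ => x ^ k) μ) :
    BilinForm ℝ ℝ[X] :=
  LinearMap.mk₂ ℝ (fun p q => ∫ x, p.eval x * q.eval x ∂μ)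
    (fun p₁ p₂ q => by
      simp only [eval_add, add_mul]
      exact integral_add (integrable_eval_mul_eval hμ p₁ q) (integrable_eval_mul_eval hμ p₂ q))
    (fun c p q => by simp only [eval_smul, smul_eq_mul, mul_assoc, integral_const_mul])
    (fun p q₁ q₂ => by
      simp only [eval_add, mul_add]
      exact integral_add (integrable_eval_mul_eval hμ p q₁) (integrable_eval_mul_eval hμ p q₂))
    (fun c p q => by simp only [eval_smul, smul_eq_mul, mul_left_comm, integral_const_mul])

@[simp]
theorem momentForm_apply (hμ : ∀ k : ℕ, Integrable (fun x : ℝ => x ^ k) μ) (p q : ℝ[X]) :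
    momentForm μ hμ p q = ∫ x, p.eval x * q.eval x ∂μ :=
  rfl

noncomputable def momentMatrix (μ : Measure ℝ) (m : ℕ) : Matrix (Fin m) (Fin m) ℝ :=
  Matrix.of fun j k => ∫ x, x ^ ((j : ℕ) + (k : ℕ)) ∂μ

theorem momentForm_eq_dotProduct_mulVec (hμ : ∀ k : ℕ, Integrable (fun x : ℝ => x ^ k) μ)
    {m : ℕ} {p q : ℝ[X]} (hp : p ∈ degreeLT ℝ m) (hq : q ∈ degreeLT ℝ m) :
    momentForm μ hμ p q =
      degreeLTEquiv ℝ m ⟨p, hp⟩ ⬝ᵥ (momentMatrix μ m *ᵥ degreeLTEquiv ℝ m ⟨q, hq⟩) := by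
  set a := degreeLTEquiv ℝ m ⟨p, hp⟩
  set b := degreeLTEquiv ℝ m ⟨q, hq⟩
  have hexpand : ∀ x : ℝ, p.eval x * q.eval x =
      ∑ j, ∑ k, a j * b k * x ^ ((j : ℕ) + (k : ℕ)) := fun x => by
    rw [eval_eq_sum_degreeLTEquiv hp, eval_eq_sum_degreeLTEquiv hq, Finset.sum_mul_sum]
    exact Finset.sum_congr rfl fun j _ => Finset.sum_congr rfl fun k _ => by ring
  rw [momentForm_apply, integral_congr_ae (.of_forall hexpand),
    integral_finsetSum _ fun j _ => integrable_finsetSum _ fun k _ => (hμ _).const_mul _]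
  simp only [dotProduct, mulVec, momentMatrix, of_apply, Finset.mul_sum]
  refine Finset.sum_congr rfl fun j _ => ?_
  rw [integral_finsetSum _ fun k _ => (hμ _).const_mul _]
  refine Finset.sum_congr rfl fun k _ => ?_
  rw [integral_const_mul]
  ring

theorem momentForm_anisotropic_of_posDef (hμ : ∀ k : ℕ, Integrable (fun x : ℝ => x ^ k) μ)
    {m : ℕ} (hG : (momentMatrix μ m).PosDef) {p : ℝ[X]} (hp : p ∈ degreeLT ℝ m)
    (hpp : momentForm μ hμ p p = 0) : p = 0 := by
  by_contra hp0
  have hv : degreeLTEquiv ℝ m ⟨p, hp⟩ ≠ 0 := by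
    rwa [Ne, degreeLTEquiv_eq_zero_iff_eq_zero]
  have := hG.dotProduct_mulVec_pos hv
  rw [star_trivial, ← momentForm_eq_dotProduct_mulVec hμ, hpp] at this
  exact lt_irrefl _ this

end MomentForm

theorem lebesgue_eigenbasis_gaussian_nodes_general (n : ℕ) (hn : 1 ≤ n) (μ : Measure ℝ)
    (hmom : ∀ k : ℕ, Integrable (fun x => |x| ^ k) μ)
    (hgram : (Matrix.of fun j k : Fin n => ∫ x, x ^ ((j : ℕ) + (k : ℕ)) ∂μ).PosDef)
    (ψ : Fin n → Polynomial ℝ) (lam : Fin n → ℝ)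
    (heb : LebesgueEigenbasis μ (fun x => x) n ψ lam) :
    Function.Injective lam ∧
    ∃ π : Polynomial ℝ, π.Monic ∧ π.natDegree = n ∧
      (∀ q : Polynomial ℝ, q.natDegree ≤ n - 1 → (∫ x, π.eval x * q.eval x ∂μ) = 0) ∧
      (∀ x : ℝ, π.eval x = 0 ↔ ∃ i, lam i = x) ∧
      (∀ i, ∃ c : ℝ, c ≠ 0 ∧ (X - C (lam i)) * ψ i = C c * π) := by
  obtain ⟨hdeg, horth, heig⟩ := heb
  have hμ : ∀ k : ℕ, Integrable (fun x : ℝ => x ^ k) μ := fun k =>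
    (integrable_norm_iff (by fun_prop)).1 (by simpa [abs_pow] using hmom k)
  have hmem : ∀ q : ℝ[X], q.natDegree ≤ n - 1 → q ∈ degreeLT ℝ n :=
    fun q => mem_degreeLT_of_natDegree_le_pred hn
  obtain ⟨hinj, π, hπ, hπn, hπo, hroots, hmul⟩ :=
    injective_and_exists_monic_orthogonal_of_eigenbasis (B := momentForm μ hμ) hn
      (fun p hp => momentForm_anisotropic_of_posDef hμ hgram hp) (fun i => hmem _ (hdeg i))
      horth fun i j => by
        rw [momentForm_apply, ← heig i j]
        congr 1 with x
        simp only [eval_mul, eval_X]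
        ring
  refine ⟨hinj, π, hπ, hπn, fun q hq => ?_, hroots, hmul⟩
  simpa only [momentForm_apply, mul_comm] using hπo q (hmem q hq)

/-- for `f(x) = x` the eigenvalues are pairwise distinct and are exactly
the roots of the monic degree-`n` orthogonal polynomial `π_n`; moreover
`(x - lam i) * ψ i` is a nonzero scalar multiple of `π_n`. -/
theorem lebesgue_eigenbasis_gaussian_nodes (n : ℕ) (hn : 1 ≤ n) (μ : Measure ℝ)
    (hmom : ∀ k : ℕ, Integrable (fun x => |x| ^ k) μ)
    (hgram : (Matrix.of fun j k : Fin n => ∫ x, x ^ ((j : ℕ) + (k : ℕ)) ∂μ).PosDef)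
    (hgram' : (Matrix.of fun j k : Fin (n + 1) => ∫ x, x ^ ((j : ℕ) + (k : ℕ)) ∂μ).PosDef)
    (ψ : Fin n → Polynomial ℝ) (lam : Fin n → ℝ)
    (heb : LebesgueEigenbasis μ (fun x => x) n ψ lam) :
    Function.Injective lam ∧
    ∃ π : Polynomial ℝ, π.Monic ∧ π.natDegree = n ∧
      (∀ q : Polynomial ℝ, q.natDegree ≤ n - 1 → (∫ x, π.eval x * q.eval x ∂μ) = 0) ∧
      (∀ x : ℝ, π.eval x = 0 ↔ ∃ i, lam i = x) ∧
      (∀ i, ∃ c : ℝ, c ≠ 0 ∧ (X - C (lam i)) * ψ i = C c * π) :=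
  lebesgue_eigenbasis_gaussian_nodes_general n hn μ hmom hgram ψ lam heb
end

section
/- (Bound preservation of the Radon–Nikodym estimator.) Let (ψ_i, λ_i) be a Lebesgue eigenbasis for (μ, f, n) and suppose f_L ≤ f(x) ≤ f_H for μ-almost every x. Then for every x ∈ ℝ one has Σ_{i=0}^{n−1} ψ_i(x)² > 0 and f_L ≤ (Σ_{i=0}^{n−1} λ_i ψ_i(x)²) / (Σ_{i=0}^{n−1} ψ_i(x)²) ≤ f_H. -/
/-!
Each `λ i = ∫ ψᵢ² f dμ` is an average of `f` against the probability density `ψᵢ²`, hence lies in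
`[fL, fH]`, and the estimator is the convex combination of the `λ i` with weights `ψᵢ(x)²`. These
weights do not all vanish: orthonormality makes the `ψ i` linearly independent, so they span the
polynomials of degree `< n`, which contain `1`. All integrands are integrable because
`∫ ψᵢ² dμ = 1 ≠ 0` forces `ψ i ∈ L²(μ)` and `f` is essentially bounded.
-/

open MeasureTheory Polynomial

section Integral

variable {α : Type*} [MeasurableSpace α] {μ : Measure α} {g f : α → ℝ} {a b : ℝ}

theorem memLp_two_of_integral_mul_self_ne_zero (hg : AEStronglyMeasurable g μ)
    (h : ∫ x, g x * g x ∂μ ≠ 0) : MemLp g 2 μ :=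
  (memLp_two_iff_integrable_sq hg).2 <| by
    simpa only [sq] using Integrable.of_integral_ne_zero h

theorem integral_mul_mem_Icc_of_ae_mem_Icc (hg : 0 ≤ᵐ[μ] g) (hg1 : ∫ x, g x ∂μ = 1)
    (hgf : Integrable (fun x => g x * f x) μ) (hf : ∀ᵐ x ∂μ, f x ∈ Set.Icc a b) :
    ∫ x, g x * f x ∂μ ∈ Set.Icc a b := by
  have hg_int : Integrable g μ := .of_integral_ne_zero (by simp [hg1])
  have hconst : ∀ c, ∫ x, g x * c ∂μ = c := fun c => by
    rw [integral_mul_const, hg1, one_mul]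
  constructor
  · calc a = ∫ x, g x * a ∂μ := (hconst a).symm
      _ ≤ ∫ x, g x * f x ∂μ := integral_mono_ae (hg_int.mul_const a) hgf <| by
        filter_upwards [hg, hf] with x hgx hfx using mul_le_mul_of_nonneg_left hfx.1 hgx
  · calc ∫ x, g x * f x ∂μ ≤ ∫ x, g x * b ∂μ := integral_mono_ae hgf (hg_int.mul_const b) <| by
          filter_upwards [hg, hf] with x hgx hfx using mul_le_mul_of_nonneg_left hfx.2 hgx
      _ = b := hconst b

theorem linearIndependent_of_integral_mul_eq_ite {ι : Type*} [Fintype ι] [DecidableEq ι]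
    {φ : ι → α → ℝ} (hφ : ∀ i, AEStronglyMeasurable (φ i) μ)
    (horth : ∀ i j, ∫ x, φ i x * φ j x ∂μ = if i = j then 1 else 0) :
    LinearIndependent ℝ φ := by
  have hL2 : ∀ i, MemLp (φ i) 2 μ := fun i =>
    memLp_two_of_integral_mul_self_ne_zero (hφ i) (by simp [horth])
  rw [Fintype.linearIndependent_iff]
  intro c hc i
  have hint : ∀ j, Integrable (fun x => c j * (φ j x * φ i x)) μ := fun j =>
    ((hL2 j).integrable_mul (hL2 i)).const_mul (c j)
  calc c i = ∑ j, c j * ∫ x, φ j x * φ i x ∂μ := by simp [horth]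
    _ = ∫ x, (∑ j, c j • φ j) x * φ i x ∂μ := by
      simp only [← integral_const_mul, ← integral_finsetSum _ fun j _ => hint j,
        Finset.sum_apply, Pi.smul_apply, smul_eq_mul, Finset.sum_mul, mul_assoc]
    _ = 0 := by rw [hc]; simp

end Integral

namespace Polynomial

variable {K : Type*} [Field K] {ι : Type*} [Fintype ι] {ψ : ι → K[X]}

theorem span_range_eq_degreeLT_of_linearIndependent (hψ : LinearIndependent K ψ)
    (hdeg : ∀ i, ψ i ∈ degreeLT K (Fintype.card ι)) :
    Submodule.span K (Set.range ψ) = degreeLT K (Fintype.card ι) :=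
  Submodule.eq_of_le_of_finrank_eq (Submodule.span_le.2 <| Set.range_subset_iff.2 hdeg) <| by
    rw [finrank_span_eq_card hψ, (degreeLTEquiv K _).finrank_eq, Module.finrank_fin_fun]

theorem exists_eval_ne_zero_of_linearIndependent [Nonempty ι] (hψ : LinearIndependent K ψ)
    (hdeg : ∀ i, ψ i ∈ degreeLT K (Fintype.card ι)) (x : K) : ∃ i, (ψ i).eval x ≠ 0 := by
  by_contra! h
  have hone : (1 : K[X]) ∈ Submodule.span K (Set.range ψ) := by
    rw [span_range_eq_degreeLT_of_linearIndependent hψ hdeg, mem_degreeLT, degree_one]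
    exact_mod_cast Fintype.card_pos
  have hker : Submodule.span K (Set.range ψ) ≤ LinearMap.ker (leval x) :=
    Submodule.span_le.2 <| Set.range_subset_iff.2 fun i => by simp [h i]
  simpa using hker hone

end Polynomial

theorem radon_nikodym_estimator_bounded_general (n : ℕ) (hn : 1 ≤ n) (μ : Measure ℝ)
    (f : ℝ → ℝ) (hf : Measurable f)
    (ψ : Fin n → Polynomial ℝ) (lam : Fin n → ℝ)
    (heb : LebesgueEigenbasis μ f n ψ lam)
    (fL fH : ℝ) (hbound : ∀ᵐ x ∂μ, fL ≤ f x ∧ f x ≤ fH) (x : ℝ) :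
    0 < ∑ i, ((ψ i).eval x) ^ 2 ∧
    fL ≤ (∑ i, lam i * ((ψ i).eval x) ^ 2) / (∑ i, ((ψ i).eval x) ^ 2) ∧
    (∑ i, lam i * ((ψ i).eval x) ^ 2) / (∑ i, ((ψ i).eval x) ^ 2) ≤ fH := by
  obtain ⟨hdeg, horth, heig⟩ := heb
  have hlam : ∀ i, lam i ∈ Set.Icc fL fH := fun i => by
    have hsq : Integrable (fun x => (ψ i).eval x * (ψ i).eval x) μ :=
      .of_integral_ne_zero (by simp [horth])
    have hf_bdd : ∀ᵐ x ∂μ, ‖f x‖ ≤ max |fL| |fH| := by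
      filter_upwards [hbound] with x hx using abs_le_max_abs_abs hx.1 hx.2
    simpa [heig] using integral_mul_mem_Icc_of_ae_mem_Icc
      (ae_of_all _ fun x => mul_self_nonneg _) (by simp [horth])
      (hsq.mul_bdd hf.aestronglyMeasurable hf_bdd) hbound
  have hindep : LinearIndependent ℝ ψ :=
    LinearIndependent.of_comp (LinearMap.pi fun x => leval x) <|
      linearIndependent_of_integral_mul_eq_ite
        (fun i => (ψ i).continuous.aestronglyMeasurable) horth
  have : Nonempty (Fin n) := ⟨⟨0, hn⟩⟩
  obtain ⟨i, hi⟩ := exists_eval_ne_zero_of_linearIndependent hindep (fun i =>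
    mem_degreeLT.2 <| (degree_le_of_natDegree_le (hdeg i)).trans_lt <| by
      rw [Fintype.card_fin]; exact_mod_cast Nat.sub_lt hn one_pos) x
  have hpos : 0 < ∑ i, (ψ i).eval x ^ 2 :=
    Finset.sum_pos' (fun i _ => sq_nonneg _) ⟨i, Finset.mem_univ _, by positivity⟩
  have hmean := (convex_Icc fL fH).centerMass_mem (fun i _ => sq_nonneg ((ψ i).eval x)) hpos
    fun i _ => hlam i
  rw [Finset.centerMass, smul_eq_mul, inv_mul_eq_div] at hmean
  simp only [smul_eq_mul, mul_comm _ (lam _)] at hmean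
  exact ⟨hpos, hmean⟩

/-- bound preservation of the Radon–Nikodym estimator. -/
theorem radon_nikodym_estimator_bounded (n : ℕ) (hn : 1 ≤ n) (μ : Measure ℝ)
    (hmom : ∀ k : ℕ, Integrable (fun x => |x| ^ k) μ)
    (hgram : (Matrix.of fun j k : Fin n => ∫ x, x ^ ((j : ℕ) + (k : ℕ)) ∂μ).PosDef)
    (f : ℝ → ℝ) (hf : Measurable f)
    (hfint : ∀ m ≤ 2 * n - 2, Integrable (fun x => f x * x ^ m) μ)
    (ψ : Fin n → Polynomial ℝ) (lam : Fin n → ℝ)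
    (heb : LebesgueEigenbasis μ f n ψ lam)
    (fL fH : ℝ) (hbound : ∀ᵐ x ∂μ, fL ≤ f x ∧ f x ≤ fH) (x : ℝ) :
    0 < ∑ i, ((ψ i).eval x) ^ 2 ∧
    fL ≤ (∑ i, lam i * ((ψ i).eval x) ^ 2) / (∑ i, ((ψ i).eval x) ^ 2) ∧
    (∑ i, lam i * ((ψ i).eval x) ^ 2) / (∑ i, ((ψ i).eval x) ^ 2) ≤ fH :=
  radon_nikodym_estimator_bounded_general n hn μ f hf ψ lam heb fL fH hbound x
end
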